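/- arXiv:2504.14484 — 2 statements merged into one kernel-verified Lean document; each statement's English description precedes it below -/
import Mathlib

section
/- Let P be a potential graph with barrier digraph V, and let S ⊊ N be such that T_S ≠ ∅ and P has at least one edge joining a vertex of S to a vertex of N \ S. Then λ°_S = ν_S − Σ_{t ∈ S} p_{tt} + min { p_{qr} : q ∈ S, r ∉ S, (q,r) an edge of P }. -/
open scoped Classical

namespace BarrierForests

variable {α : Type*} [Fintype α] [DecidableEq α]

/-- Total weight of a set of arcs. -/
def aweight (v : α → α → ℝ) (A : Finset (α × α)) : ℝ := ∑ a ∈ A, v a.1 a.2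

/-- Weight `Υ^A_S` of the arcs of `A` whose tail lies in `S`. -/
def aweightOn (v : α → α → ℝ) (A : Finset (α × α)) (S : Finset α) : ℝ :=
  ∑ a ∈ A.filter (fun a => a.1 ∈ S), v a.1 a.2

/-- The relation "there is an arc from `i` to `j` in `A`". -/
def arcRel (A : Finset (α × α)) : α → α → Prop := fun i j => (i, j) ∈ A

/-- Entering forest: every vertex has out-degree at most one, and there are no
directed cycles. -/
def IsEForest (A : Finset (α × α)) : Prop :=
  (∀ i j j', (i, j) ∈ A → (i, j') ∈ A → j = j') ∧
  ∀ i, ¬ Relation.TransGen (arcRel A) i i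

/-- Roots of a (spanning) entering forest: the vertices with no outgoing arc. -/
noncomputable def rootSet (A : Finset (α × α)) : Finset α :=
  Finset.univ.filter fun i => ∀ j, (i, j) ∉ A

/-- `𝓕^k`: spanning entering forests of the digraph with arc set `E`
having exactly `k` trees (equivalently, `k` roots). -/
def FSet (E : Finset (α × α)) (k : ℕ) : Set (Finset (α × α)) :=
  {A | A ⊆ E ∧ IsEForest A ∧ (rootSet A).card = k}

/-- The infimum (in `EReal`, so `⊤` for the empty family) of the `w`-weights of the
members of `s`. -/
noncomputable def minW {β : Type*} (s : Set β) (w : β → ℝ) : EReal :=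
  sInf ((fun x => (w x : EReal)) '' s)

/-- `φ^k`: minimum weight of a spanning entering forest with `k` trees. -/
noncomputable def phi (v : α → α → ℝ) (E : Finset (α × α)) (k : ℕ) : EReal :=
  minW (FSet E k) (aweight v)

/-- `F ∈ 𝓕̃^k`: minimal spanning entering forest with `k` trees. -/
def IsMinForest (v : α → α → ℝ) (E : Finset (α × α)) (k : ℕ) (F : Finset (α × α)) : Prop :=
  F ∈ FSet E k ∧ (aweight v F : EReal) = phi v E k

/-- Vertex set of the tree `T^F_i` of the entering forest `F` rooted at `i`:
all vertices from which `i` is reachable. -/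
noncomputable def treeVerts (F : Finset (α × α)) (i : α) : Finset α :=
  Finset.univ.filter fun j => Relation.ReflTransGen (arcRel F) j i

/-- Arc set of the tree `T^F_i`. -/
noncomputable def treeArcs (F : Finset (α × α)) (i : α) : Finset (α × α) :=
  F.filter fun a => a.1 ∈ treeVerts F i

/-- Induced subgraph (restriction) of the arc set `A` on the vertex set `S`. -/
def restrictArcs (A : Finset (α × α)) (S : Finset α) : Finset (α × α) :=
  A.filter fun a => a.1 ∈ S ∧ a.2 ∈ S

/-- `T ∈ 𝓣^{•q}_S`: `T` is an entering tree that is a subgraph of the digraph with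
arc set `E`, with vertex set `S` and root `q`. -/
def IsTreeOn (E T : Finset (α × α)) (S : Finset α) (q : α) : Prop :=
  q ∈ S ∧ T ⊆ E ∧ (∀ a ∈ T, a.1 ∈ S ∧ a.2 ∈ S) ∧
  (∀ i ∈ S, i ≠ q → ∃! j, (i, j) ∈ T) ∧
  (∀ j, (q, j) ∉ T) ∧
  ∀ i ∈ S, Relation.ReflTransGen (arcRel T) i q

/-- `λ^{•q}_S`. -/
noncomputable def lamB (v : α → α → ℝ) (E : Finset (α × α)) (S : Finset α) (q : α) : EReal :=
  minW {T | IsTreeOn E T S q} (aweight v)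

/-- `λ^•_S = min_{q ∈ S} λ^{•q}_S`. -/
noncomputable def lamBul (v : α → α → ℝ) (E : Finset (α × α)) (S : Finset α) : EReal :=
  minW {T | ∃ q ∈ S, IsTreeOn E T S q} (aweight v)

/-- `T ∈ 𝓣^{∘q}_S`: `T` has `|S| + 1` vertices, `T|_S` is an entering tree with vertex
set `S` and root `q`, and the single arc of `T` leaving `S` goes from `q` to the root
`r ∉ S` of `T`. -/
def IsCTreeOn (E T : Finset (α × α)) (S : Finset α) (q : α) : Prop :=
  ∃ r, r ∉ S ∧ ∃ T', IsTreeOn E T' S q ∧ (q, r) ∈ E ∧ T = insert (q, r) T'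

/-- `λ^{∘q}_S`. -/
noncomputable def lamC (v : α → α → ℝ) (E : Finset (α × α)) (S : Finset α) (q : α) : EReal :=
  minW {T | IsCTreeOn E T S q} (aweight v)

/-- `λ^∘_S = min_{q ∈ S} λ^{∘q}_S`. -/
noncomputable def lamCirc (v : α → α → ℝ) (E : Finset (α × α)) (S : Finset α) : EReal :=
  minW {T | ∃ q ∈ S, IsCTreeOn E T S q} (aweight v)

/-- `μ^∘_S`: minimum of `Υ^F_S` over the spanning entering forests `F ∈ 𝓕^∘_S`,
i.e. those in which every vertex of `S` has an outgoing arc. -/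
noncomputable def muCirc (v : α → α → ℝ) (E : Finset (α × α)) (S : Finset α) : EReal :=
  minW {A | A ⊆ E ∧ IsEForest A ∧ ∀ i ∈ S, ∃ j, (i, j) ∈ A} fun A => aweightOn v A S

/-- `G ∈ 𝓡^F_y`: `G` is a descendant of `F` at the root `y`, i.e. `y` is a root of
`F`, the roots of `G` are those of `F` except `y`, `G` induces `T^F_q` on the vertex
set of every tree of `F` other than `T^F_y`, and `G` induces a tree on the vertex set
of `T^F_y`. -/
def IsDescendant (E F G : Finset (α × α)) (y : α) : Prop :=
  y ∈ rootSet F ∧ rootSet G = rootSet F \ {y} ∧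
  (∀ q ∈ rootSet G, restrictArcs G (treeVerts F q) = treeArcs F q) ∧
  ∃ a ∈ treeVerts F y, IsTreeOn E (restrictArcs G (treeVerts F y)) (treeVerts F y) a

/-- A potential graph: a connected weighted undirected graph with a loop at every
vertex.  Edges are recorded as a symmetric reflexive set of ordered pairs, with a
symmetric weight function `p`. -/
structure PotGraph (α : Type*) [Fintype α] [DecidableEq α] where
  p : α → α → ℝ
  edges : Finset (α × α)
  symm_mem : ∀ i j, (i, j) ∈ edges → (j, i) ∈ edges
  loop_mem : ∀ i, (i, i) ∈ edges
  symm_w : ∀ i j, p i j = p j i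
  connected : ∀ i j : α, Relation.ReflTransGen (fun a b => (a, b) ∈ edges ∧ a ≠ b) i j

/-- Arc set of the barrier digraph of the potential graph `P`: an arc `(i,j)`, `i ≠ j`,
for each non-loop edge of `P`. -/
def barcs (P : PotGraph α) : Finset (α × α) := P.edges.filter fun a => a.1 ≠ a.2

/-- Arc weights of the barrier digraph: `v i j = p i j - p i i`. -/
def bw (P : PotGraph α) : α → α → ℝ := fun i j => P.p i j - P.p i i

/-- Weight of a set of undirected edges of `P`. -/
noncomputable def uweight (P : PotGraph α) (T : Finset (Sym2 α)) : ℝ :=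
  ∑ e ∈ T, Sym2.lift ⟨P.p, P.symm_w⟩ e

/-- `T ∈ 𝓣_S`: `T` is an undirected tree that is a subgraph of `P` (loops unused)
with vertex set `S`: its edges are non-loop edges of `P` joining vertices of `S`,
it is connected on `S`, and it has `|S| - 1` edges. -/
def IsUTreeOn (P : PotGraph α) (T : Finset (Sym2 α)) (S : Finset α) : Prop :=
  (∀ e ∈ T, ∃ i j, i ≠ j ∧ e = s(i, j) ∧ (i, j) ∈ P.edges ∧ i ∈ S ∧ j ∈ S) ∧
  (∀ i ∈ S, ∀ j ∈ S, Relation.ReflTransGen (fun a b => s(a, b) ∈ T) i j) ∧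
  T.card + 1 = S.card

/-- `ν_S`: minimum weight of an undirected tree on `S` that is a subgraph of `P`. -/
noncomputable def nu (P : PotGraph α) (S : Finset α) : EReal :=
  minW {T | IsUTreeOn P T S} (uweight P)

/-- The underlying undirected edge set of a set of arcs. -/
def undir (A : Finset (α × α)) : Finset (Sym2 α) := A.image fun a => s(a.1, a.2)

/-- `Tq` is the entering tree (with root `q`, vertex set `S`, subgraph of the barrier
digraph of `P`) corresponding to the undirected tree `T`: it is obtained from `T` by
directing all edges toward `q` and replacing the weight of each arc `(i,j)` by
`v i j = p i j - p i i`. -/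
def Corresponds (P : PotGraph α) (Tq : Finset (α × α)) (T : Finset (Sym2 α))
    (S : Finset α) (q : α) : Prop :=
  IsTreeOn (barcs P) Tq S q ∧ undir Tq = T
/-!
Directing the edges of an undirected tree on `S` towards a vertex `q ∈ S` turns it into an
entering tree of the barrier digraph with root `q`, and every such entering tree arises this way.
Every vertex of `S` except `q` is the tail of exactly one arc, so the barrier weight of the
entering tree is the `P`-weight of the undirected tree minus `∑_{t ∈ S} p_tt` plus `p_qq`.
Appending the exit arc `(q, r)` replaces `p_qq` by `p_qr`.  Hence the weight of a tree in
`𝓣^∘_S` is the weight of an undirected tree on `S` plus that of a crossing edge, minus the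
constant `∑_{t ∈ S} p_tt`, and the two parts can be minimized independently: direct a minimal
tree on `S` towards the endpoint in `S` of a minimal crossing edge.
-/

theorem minW_eq {β : Type*} {s : Set β} {w : β → ℝ} {x : β} (hx : x ∈ s)
    (hmin : ∀ y ∈ s, w x ≤ w y) : minW s w = w x :=
  IsLeast.csInf_eq
    ⟨⟨x, hx, rfl⟩, by rintro _ ⟨y, hy, rfl⟩; exact EReal.coe_le_coe_iff.2 (hmin y hy)⟩

theorem _root_.SimpleGraph.Reachable.exists_adj_dist_lt {V : Type*} {G : SimpleGraph V} {u v : V}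
    (h : G.Reachable u v) (hne : u ≠ v) : ∃ w, G.Adj u w ∧ G.dist w v < G.dist u v := by
  obtain ⟨p, hp⟩ := h.exists_walk_length_eq_dist
  cases p with
  | nil => exact absurd rfl hne
  | cons hadj p =>
    refine ⟨_, hadj, ?_⟩
    rw [← hp, SimpleGraph.Walk.length_cons]
    exact Nat.lt_succ_of_le (SimpleGraph.dist_le p)

namespace IsTreeOn

variable {β : Type*} {E T : Finset (β × β)} {S : Finset β} {q : β}

theorem injOn_fst (h : IsTreeOn E T S q) : Set.InjOn Prod.fst (T : Set (β × β)) := by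
  rintro ⟨i, j⟩ hij ⟨i', k⟩ hik (rfl : i = i')
  obtain ⟨-, -, hS, hout, hroot, -⟩ := h
  have hiq : i ≠ q := by
    rintro rfl
    exact hroot j hij
  obtain ⟨l, -, hl⟩ := hout i (hS _ hij).1 hiq
  rw [hl j hij, hl k hik]

theorem swap_notMem (h : IsTreeOn E T S q) {i j : β} (hij : (i, j) ∈ T) : (j, i) ∉ T := by
  intro hji
  have hclosed : ∀ k, Relation.ReflTransGen (arcRel T) i k → k = i ∨ k = j := by
    intro k hk
    induction hk with
    | refl => exact Or.inl rfl
    | tail _ hkl ih =>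
      rcases ih with rfl | rfl
      · exact Or.inr (congrArg Prod.snd (h.injOn_fst hkl hij rfl))
      · exact Or.inl (congrArg Prod.snd (h.injOn_fst hkl hji rfl))
  obtain ⟨-, -, hS, -, hroot, hreach⟩ := h
  rcases hclosed q (hreach i (hS _ hij).1) with rfl | rfl
  · exact hroot j hij
  · exact hroot i hji

theorem injOn_sym2 (h : IsTreeOn E T S q) :
    Set.InjOn (fun a : β × β => s(a.1, a.2)) (T : Set (β × β)) := by
  rintro ⟨i, j⟩ hij ⟨k, l⟩ hkl hs
  rcases Sym2.eq_iff.1 hs with ⟨rfl, rfl⟩ | ⟨rfl, rfl⟩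
  · rfl
  · exact (h.swap_notMem hij hkl).elim

theorem image_fst [DecidableEq β] (h : IsTreeOn E T S q) : T.image Prod.fst = S.erase q := by
  obtain ⟨-, -, hS, hout, hroot, -⟩ := h
  ext i
  simp only [Finset.mem_image, Finset.mem_erase]
  constructor
  · rintro ⟨⟨i, j⟩, hij, rfl⟩
    exact ⟨fun hiq => hroot j (hiq ▸ hij), (hS _ hij).1⟩
  · rintro ⟨hiq, hi⟩
    obtain ⟨j, hij, -⟩ := hout i hi hiq
    exact ⟨(i, j), hij, rfl⟩

theorem card_add_one (h : IsTreeOn E T S q) : T.card + 1 = S.card := by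
  classical
  rw [← Finset.card_image_of_injOn h.injOn_fst, h.image_fst, Finset.card_erase_add_one h.1]

end IsTreeOn

theorem isTreeOn_image_erase {β : Type*} [DecidableEq β] {E : Finset (β × β)} {S : Finset β}
    {q : β} (hq : q ∈ S) {f : β → β} (d : β → ℕ)
    (hf : ∀ i ∈ S, i ≠ q → (i, f i) ∈ E ∧ f i ∈ S ∧ d (f i) < d i) :
    IsTreeOn E ((S.erase q).image fun i => (i, f i)) S q := by
  have hmem : ∀ {i j}, (i, j) ∈ (S.erase q).image (fun i => (i, f i)) ↔
      i ∈ S ∧ i ≠ q ∧ j = f i := by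
    intro i j
    simp only [Finset.mem_image, Finset.mem_erase, Prod.mk.injEq]
    constructor
    · rintro ⟨i, ⟨hiq, hi⟩, rfl, rfl⟩
      exact ⟨hi, hiq, rfl⟩
    · rintro ⟨hi, hiq, rfl⟩
      exact ⟨i, ⟨hiq, hi⟩, rfl, rfl⟩
  refine ⟨hq, ?_, ?_, ?_, ?_, ?_⟩
  · rintro ⟨i, j⟩ hij
    obtain ⟨hi, hiq, rfl⟩ := hmem.1 hij
    exact (hf i hi hiq).1
  · rintro ⟨i, j⟩ hij
    obtain ⟨hi, hiq, rfl⟩ := hmem.1 hij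
    exact ⟨hi, (hf i hi hiq).2.1⟩
  · exact fun i hi hiq => ⟨f i, hmem.2 ⟨hi, hiq, rfl⟩, fun j hij => (hmem.1 hij).2.2⟩
  · exact fun j hqj => (hmem.1 hqj).2.1 rfl
  · intro i hi
    induction hd : d i using Nat.strong_induction_on generalizing i with
    | _ n ih =>
      by_cases hiq : i = q
      · rw [hiq]
      · obtain ⟨-, hfi, hlt⟩ := hf i hi hiq
        exact .head (hmem.2 ⟨hi, hiq, rfl⟩) (ih _ (hd ▸ hlt) (f i) hfi rfl)

variable {P : PotGraph α} {T : Finset (α × α)} {S : Finset α} {q : α}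

theorem IsTreeOn.isUTreeOn_undir (h : IsTreeOn (barcs P) T S q) : IsUTreeOn P (undir T) S := by
  have ⟨_, hE, hS, _, _, hreach⟩ := h
  refine ⟨?_, ?_, ?_⟩
  · rintro _ he
    obtain ⟨⟨i, j⟩, hij, rfl⟩ := Finset.mem_image.1 he
    obtain ⟨hedge, hne⟩ := Finset.mem_filter.1 (hE hij)
    exact ⟨i, j, hne, rfl, hedge, hS _ hij⟩
  · have hsymm : Std.Symm fun a b : α => s(a, b) ∈ undir T :=
      ⟨fun a b hab => by rwa [Sym2.eq_swap]⟩
    have hmono : arcRel T ≤ fun a b => s(a, b) ∈ undir T :=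
      fun a b hab => Finset.mem_image_of_mem _ hab
    intro i hi j hj
    exact (Relation.ReflTransGen.mono hmono _ _ (hreach i hi)).trans
      (Std.Symm.symm _ _ (Relation.ReflTransGen.mono hmono _ _ (hreach j hj)))
  · rw [undir, Finset.card_image_of_injOn h.injOn_sym2, h.card_add_one]

theorem IsTreeOn.aweight_bw (h : IsTreeOn (barcs P) T S q) :
    aweight (bw P) T = uweight P (undir T) - ∑ t ∈ S, P.p t t + P.p q q := by
  have hedges : uweight P (undir T) = ∑ a ∈ T, P.p a.1 a.2 :=
    Finset.sum_image h.injOn_sym2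
  have hloops : ∑ a ∈ T, P.p a.1 a.1 = ∑ t ∈ S, P.p t t - P.p q q := by
    rw [← Finset.sum_erase_eq_sub h.1, ← h.image_fst, Finset.sum_image h.injOn_fst]
  simp only [aweight, bw, Finset.sum_sub_distrib]
  linarith

theorem IsTreeOn.aweight_bw_insert (h : IsTreeOn (barcs P) T S q) (r : α) :
    aweight (bw P) (insert (q, r) T) = uweight P (undir T) - ∑ t ∈ S, P.p t t + P.p q r := by
  have ⟨_, _, _, _, hroot, _⟩ := h
  rw [aweight, Finset.sum_insert (hroot r), ← aweight, h.aweight_bw, bw]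
  ring

theorem IsUTreeOn.mem_barcs {U : Finset (Sym2 α)} (hU : IsUTreeOn P U S) {i j : α}
    (h : s(i, j) ∈ U) : (i, j) ∈ barcs P ∧ i ∈ S ∧ j ∈ S := by
  obtain ⟨a, b, hab, he, hE, ha, hb⟩ := hU.1 _ h
  rcases Sym2.eq_iff.1 he with ⟨rfl, rfl⟩ | ⟨rfl, rfl⟩
  · exact ⟨Finset.mem_filter.2 ⟨hE, hab⟩, ha, hb⟩
  · exact ⟨Finset.mem_filter.2 ⟨P.symm_mem _ _ hE, hab.symm⟩, hb, ha⟩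

theorem IsUTreeOn.exists_corresponds {U : Finset (Sym2 α)} (hU : IsUTreeOn P U S) (hq : q ∈ S) :
    ∃ T, Corresponds P T U S q := by
  let G := SimpleGraph.fromEdgeSet (U : Set (Sym2 α))
  have hreach : ∀ i ∈ S, G.Reachable i q := fun i hi =>
    (SimpleGraph.reachable_iff_reflTransGen _ _).2 <|
      Relation.ReflTransGen.mono (r := fun a b => s(a, b) ∈ U)
        (fun a b hab => (SimpleGraph.fromEdgeSet_adj _).2
          ⟨hab, (Finset.mem_filter.1 (hU.mem_barcs hab).1).2⟩)
        _ _ (hU.2.1 i hi q hq)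
  -- each edge is directed from its endpoint farther from `q` to the nearer one
  have hcloser : ∀ i, ∃ j, i ∈ S → i ≠ q → s(i, j) ∈ U ∧ G.dist j q < G.dist i q := by
    intro i
    by_cases hi : i ∈ S ∧ i ≠ q
    · obtain ⟨j, hadj, hlt⟩ := (hreach i hi.1).exists_adj_dist_lt hi.2
      exact ⟨j, fun _ _ => ⟨((SimpleGraph.fromEdgeSet_adj _).1 hadj).1, hlt⟩⟩
    · exact ⟨i, fun h h' => absurd ⟨h, h'⟩ hi⟩
  choose f hf using hcloser
  have hT : IsTreeOn (barcs P) ((S.erase q).image fun i => (i, f i)) S q :=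
    isTreeOn_image_erase hq (G.dist · q) fun i hi hiq =>
      have ⟨hedge, hlt⟩ := hf i hi hiq
      ⟨(hU.mem_barcs hedge).1, (hU.mem_barcs hedge).2.2, hlt⟩
  refine ⟨_, hT, Finset.eq_of_subset_of_card_le ?_ ?_⟩
  · intro e he
    obtain ⟨_, hij, rfl⟩ := Finset.mem_image.1 he
    obtain ⟨i, hi, rfl⟩ := Finset.mem_image.1 hij
    obtain ⟨hiq, hi⟩ := Finset.mem_erase.1 hi
    exact (hf i hi hiq).1
  · have := hT.isUTreeOn_undir.2.2
    have := hU.2.2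
    omega

theorem statement13_general (P : PotGraph α) (S : Finset α)
    (hne : ∃ T, IsUTreeOn P T S)
    (hcross : ∃ e : α × α, e.1 ∈ S ∧ e.2 ∉ S ∧ e ∈ P.edges) :
    lamCirc (bw P) (barcs P) S =
      nu P S - ((∑ t ∈ S, P.p t t : ℝ) : EReal) +
        sInf ((fun e : α × α => ((P.p e.1 e.2 : ℝ) : EReal)) ''
          {e : α × α | e.1 ∈ S ∧ e.2 ∉ S ∧ e ∈ P.edges}) := by
  obtain ⟨U₀, hU₀, hU₀min⟩ :=
    Set.exists_min_image {U | IsUTreeOn P U S} (uweight P) (Set.toFinite _) hne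
  obtain ⟨⟨q₀, r₀⟩, hcross₀, hcross₀min⟩ :=
    Set.exists_min_image {e : α × α | e.1 ∈ S ∧ e.2 ∉ S ∧ e ∈ P.edges}
      (fun e => P.p e.1 e.2) (Set.toFinite _) hcross
  have ⟨hq₀, hr₀, hedge₀⟩ : q₀ ∈ S ∧ r₀ ∉ S ∧ (q₀, r₀) ∈ P.edges := hcross₀
  obtain ⟨T₀, hT₀, rfl⟩ := hU₀.exists_corresponds hq₀
  have hC₀ : insert (q₀, r₀) T₀ ∈ {T | ∃ q ∈ S, IsCTreeOn (barcs P) T S q} :=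
    ⟨q₀, hq₀, r₀, hr₀, T₀, hT₀, Finset.mem_filter.2 ⟨hedge₀, fun h : q₀ = r₀ => hr₀ (h ▸ hq₀)⟩, rfl⟩
  change _ = _ - _ + minW _ (fun e : α × α => P.p e.1 e.2)
  rw [nu, minW_eq hU₀ hU₀min, minW_eq hcross₀ hcross₀min, lamCirc, minW_eq hC₀,
    hT₀.aweight_bw_insert]
  · norm_cast
  · rintro _ ⟨q, hq, r, hr, T, hT, hqr, rfl⟩
    rw [hT₀.aweight_bw_insert, hT.aweight_bw_insert]
    linarith [hU₀min _ hT.isUTreeOn_undir, hcross₀min (q, r) ⟨hq, hr, (Finset.mem_filter.1 hqr).1⟩]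

/-- Assertion 6.  If `S ⊊ N`, `𝓣_S ≠ ∅`, and `P` has an edge
joining `S` to its complement, then
`λ^∘_S = ν_S - ∑_{t ∈ S} p t t + min {p q r : q ∈ S, r ∉ S, (q,r) an edge of P}`. -/
theorem statement13 (P : PotGraph α) (S : Finset α) (hS : S ⊂ Finset.univ)
    (hne : ∃ T, IsUTreeOn P T S)
    (hcross : ∃ e : α × α, e.1 ∈ S ∧ e.2 ∉ S ∧ e ∈ P.edges) :
    lamCirc (bw P) (barcs P) S =
      nu P S - ((∑ t ∈ S, P.p t t : ℝ) : EReal) +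
        sInf ((fun e : α × α => ((P.p e.1 e.2 : ℝ) : EReal)) ''
          {e : α × α | e.1 ∈ S ∧ e.2 ∉ S ∧ e ∈ P.edges}) :=
  statement13_general P S hne hcross

end BarrierForests
end

section
/- Let P be a potential graph with barrier digraph V, let F ∈ F̃^k be a minimal spanning entering forest of V with k ≥ 2 trees, and define the enlarged barrier digraph V^k on the root set K_F by v^k_{li} = min { p_{qr} : q ∈ V(T^F_l), r ∈ V(T^F_i), (q,r) an edge of P } − p_{ll} for l ≠ i (no arc (l,i) if no such edge of P exists). Suppose (y,x) is a minimum-weight arc of V^k and (a,b) is an edge of P with a ∈ V(T^F_y), b ∈ V(T^F_x) and p_{ab} = min { p_{qr} : q ∈ V(T^F_y), r ∈ V(T^F_x), (q,r) an edge of P }. Let G be the spanning entering forest obtained from F by reorienting the tree T^F_y so that its root becomes a and adding the arc (a,b). Then G ∈ F̃^{k−1} ∩ R^F_y, and Υ^G = Υ^F + p_{ab} − p_{yy}. -/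
open scoped Classical

namespace BarrierForests

variable {α : Type*} [Fintype α] [DecidableEq α]

/-- The minimal barrier `min {p q r : q ∈ V(T^F_l), r ∈ V(T^F_i), (q,r) an edge of P}`
between the vertex sets of the trees of `F` rooted at `l` and at `i` (`⊤` if there is
no such edge); the weight of the arc `(l,i)` of the enlarged barrier digraph `V^k` is
`crossMin P F l i - p l l`. -/
noncomputable def crossMin (P : PotGraph α) (F : Finset (α × α)) (l i : α) : EReal :=
  sInf ((fun e : α × α => ((P.p e.1 e.2 : ℝ) : EReal)) ''
    {e : α × α | e.1 ∈ treeVerts F l ∧ e.2 ∈ treeVerts F i ∧ e ∈ P.edges})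

end BarrierForests

/-!
Add to `P` an apex joined to every vertex `i` by an edge of weight `p i i`. A spanning entering
forest `F` becomes a spanning tree of this apex graph, of weight `Υ^F + ∑ p i i`, whose apex
neighbours are the roots of `F`; conversely every spanning tree is of this form, by orienting
its edges towards the apex. So it suffices to bound from below the weight of a spanning tree `T`
with `k - 1` apex neighbours. While some root `l` of `F` is not adjacent to the apex in `T`,
exchange the first edge leaving `T^F_l` on the path from `l` to the apex against the spoke at
`l`. If that edge ends in another tree of `F`, the result is a tree with `k` apex neighbours,
which weighs at least as much as `F`, while by the choice of `(y, x)` the exchange saved at most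
`p a b - p y y`. If it is a spoke at `q ∈ T^F_l`, the exchange does not increase the weight,
since `p l l ≤ p q q` by the minimality of `F` (reroot `T^F_l` at `q`). Hence every forest with
`k - 1` trees weighs at least `Υ^F + p a b - p y y`, and `G` attains this bound: reorienting
`T^F_y` towards `a` only exchanges the potentials of `y` and `a`.
-/

namespace BarrierForests

variable {α : Type*}

section Forest

variable {A F : Finset (α × α)} {i j q r y : α}

def IsFunctional (A : Finset (α × α)) : Prop :=
  ∀ i j j', (i, j) ∈ A → (i, j') ∈ A → j = j'

lemma IsFunctional.injOn_fst (hF : IsFunctional F) : Set.InjOn Prod.fst (F : Set (α × α)) := by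
  rintro ⟨i, j⟩ hij ⟨i', j'⟩ hij' (rfl : i = i')
  rw [hF i j j' hij hij']

lemma undir_injOn (hA : ∀ i, ¬ Relation.TransGen (arcRel A) i i) :
    Set.InjOn (fun g : α × α => s(g.1, g.2)) (A : Set (α × α)) := by
  rintro ⟨i, j⟩ hij ⟨i', j'⟩ hij' h
  rcases Sym2.eq_iff.1 h with ⟨rfl, rfl⟩ | ⟨rfl, rfl⟩
  · rfl
  · exact absurd (.head hij (.single hij')) (hA i)

variable [Fintype α]

lemma mem_treeVerts : i ∈ treeVerts F q ↔ Relation.ReflTransGen (arcRel F) i q := by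
  simp [treeVerts]

lemma self_mem_treeVerts : q ∈ treeVerts F q :=
  mem_treeVerts.2 .refl

lemma notMem_treeVerts_of_mem (hij : (i, j) ∈ F) (hi : i ∉ treeVerts F y) :
    j ∉ treeVerts F y :=
  fun hj => hi (mem_treeVerts.2 (.head hij (mem_treeVerts.1 hj)))

variable [DecidableEq α]

lemma mem_rootSet : i ∈ rootSet A ↔ ∀ j, (i, j) ∉ A := by
  simp [rootSet]

lemma eq_of_mem_rootSet_of_mem_treeVerts (hr : r ∈ rootSet F) (h : r ∈ treeVerts F q) :
    r = q := by
  rcases (mem_treeVerts.1 h).cases_head with h | ⟨c, hc, -⟩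
  · exact h
  · exact absurd hc (mem_rootSet.1 hr c)

lemma image_fst_eq_compl_rootSet : A.image Prod.fst = (rootSet A)ᶜ := by
  ext i
  simp [mem_rootSet]

namespace IsFunctional

lemma mem_treeVerts_of_mem (hF : IsFunctional F) (hr : r ∈ rootSet F) (hij : (i, j) ∈ F)
    (hi : i ∈ treeVerts F r) : j ∈ treeVerts F r := by
  rcases (mem_treeVerts.1 hi).cases_head with rfl | ⟨c, hc, hcr⟩
  · exact absurd hij (mem_rootSet.1 hr j)
  · exact mem_treeVerts.2 (hF i c j hc hij ▸ hcr)

lemma disjoint_treeVerts (hF : IsFunctional F) (hr : r ∈ rootSet F) (hq : q ∈ rootSet F)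
    (hne : r ≠ q) : Disjoint (treeVerts F r) (treeVerts F q) := by
  refine Finset.disjoint_left.2 fun i hir hiq => hne ?_
  induction mem_treeVerts.1 hir using Relation.ReflTransGen.head_induction_on with
  | refl => exact eq_of_mem_rootSet_of_mem_treeVerts hr hiq
  | head hic _ ih => exact ih (mem_treeVerts.2 ‹_›) (hF.mem_treeVerts_of_mem hq hic hiq)

lemma card_add_card_rootSet (hF : IsFunctional F) :
    F.card + (rootSet F).card = Fintype.card α := by
  rw [← Finset.card_image_of_injOn hF.injOn_fst, image_fst_eq_compl_rootSet,
    Finset.card_compl_add_card]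

lemma not_transGen_self (hF : IsFunctional F) (hr : r ∈ rootSet F)
    (h : Relation.ReflTransGen (arcRel F) i r) : ¬ Relation.TransGen (arcRel F) i i := by
  induction h using Relation.ReflTransGen.head_induction_on with
  | refl =>
    intro hcyc
    obtain ⟨c, hc, -⟩ := Relation.TransGen.head'_iff.1 hcyc
    exact mem_rootSet.1 hr c hc
  | head hic _ ih =>
    intro hcyc
    obtain ⟨c', hc', hc'i⟩ := Relation.TransGen.head'_iff.1 hcyc
    exact ih (Relation.TransGen.tail' (hF _ _ _ hic hc' ▸ hc'i) hic)

end IsFunctional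

lemma IsEForest.exists_mem_rootSet_reflTransGen (hF : IsEForest F) (i : α) :
    ∃ r ∈ rootSet F, Relation.ReflTransGen (arcRel F) i r := by
  have hwf : WellFounded fun j i => Relation.TransGen (arcRel F) i j :=
    @Finite.wellFounded_of_trans_of_irrefl _ _ _
      ⟨fun _ _ _ h₁ h₂ => h₂.trans h₁⟩ ⟨hF.2⟩
  induction i using hwf.induction with
  | _ i ih =>
    by_cases hi : i ∈ rootSet F
    · exact ⟨i, hi, .refl⟩
    · obtain ⟨j, hij⟩ : ∃ j, (i, j) ∈ F := by simpa [mem_rootSet] using hi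
      obtain ⟨r, hr, hjr⟩ := ih j (.single hij)
      exact ⟨r, hr, .head hij hjr⟩

lemma IsEForest.aweight_bw (P : PotGraph α) (hA : IsEForest A) :
    aweight (bw P) A = uweight P (undir A) - ∑ i ∈ A.image Prod.fst, P.p i i := by
  rw [uweight, undir, Finset.sum_image (undir_injOn hA.2),
    Finset.sum_image (IsFunctional.injOn_fst hA.1), aweight, ← Finset.sum_sub_distrib]
  rfl

end Forest

section Tree

variable {E T F : Finset (α × α)} {S : Finset α} {q y : α} [DecidableEq α]

lemma IsTreeOn.image_fst_s17 (hT : IsTreeOn E T S q) : T.image Prod.fst = S.erase q := by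
  ext i
  simp only [Finset.mem_image, Finset.mem_erase]
  constructor
  · rintro ⟨⟨i, j⟩, hij, rfl⟩
    exact ⟨fun h => hT.2.2.2.2.1 j (h ▸ hij), (hT.2.2.1 _ hij).1⟩
  · rintro ⟨hiq, hiS⟩
    obtain ⟨j, hij, -⟩ := hT.2.2.2.1 i hiS hiq
    exact ⟨(i, j), hij, rfl⟩

variable [Fintype α]

lemma IsTreeOn.isEForest (hT : IsTreeOn E T S q) : IsEForest T := by
  obtain ⟨-, -, hS, huniq, hq, hreach⟩ := hT
  have hfun : IsFunctional T := by
    intro i j j' hj hj'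
    have hiq : i ≠ q := by rintro rfl; exact hq j hj
    obtain ⟨c, -, hc⟩ := huniq i (hS _ hj).1 hiq
    rw [hc j hj, hc j' hj']
  refine ⟨hfun, fun i hcyc => ?_⟩
  obtain ⟨c, hc, -⟩ := Relation.TransGen.head'_iff.1 hcyc
  exact hfun.not_transGen_self (mem_rootSet.2 hq) (hreach i (hS _ hc).1) hcyc

/-- Since `v i j = p i j - p i i`, an entering tree weighs the `p`-weight of its undirected edges
minus the potentials of its non-root vertices. -/
lemma IsTreeOn.aweight_bw_sub {E' T' : Finset (α × α)} {q' : α} (P : PotGraph α)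
    (hT : IsTreeOn E T S q) (hT' : IsTreeOn E' T' S q') (h : undir T = undir T') :
    aweight (bw P) T - P.p q q = aweight (bw P) T' - P.p q' q' := by
  rw [hT.isEForest.aweight_bw, hT'.isEForest.aweight_bw, hT.image_fst_s17, hT'.image_fst_s17, h]
  have hq := Finset.sum_erase_add S (fun i => P.p i i) hT.1
  have hq' := Finset.sum_erase_add S (fun i => P.p i i) hT'.1
  linarith

lemma isTreeOn_treeArcs (hF : IsFunctional F) (hFE : F ⊆ E) (hy : y ∈ rootSet F) :
    IsTreeOn E (treeArcs F y) (treeVerts F y) y := by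
  have hsub : treeArcs F y ⊆ F := Finset.filter_subset _ _
  refine ⟨self_mem_treeVerts, hsub.trans hFE, ?_, ?_, fun j hj => mem_rootSet.1 hy j (hsub hj),
    fun i hi => ?_⟩
  · rintro ⟨i, j⟩ hij
    have hi := (Finset.mem_filter.1 hij).2
    exact ⟨hi, hF.mem_treeVerts_of_mem hy (hsub hij) hi⟩
  · intro i hi hiy
    obtain ⟨j, hij⟩ : ∃ j, (i, j) ∈ F := by
      by_contra! h
      exact hiy (eq_of_mem_rootSet_of_mem_treeVerts (mem_rootSet.2 h) hi)
    exact ⟨j, Finset.mem_filter.2 ⟨hij, hi⟩, fun c hc => hF i c j (hsub hc) hij⟩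
  · induction mem_treeVerts.1 hi using Relation.ReflTransGen.head_induction_on with
    | refl => exact .refl
    | head hic hcy ih =>
      exact .head (Finset.mem_filter.2 ⟨hic, mem_treeVerts.2 (.head hic hcy)⟩)
        (ih (mem_treeVerts.2 hcy))

end Tree

section Graft

variable [Fintype α] [DecidableEq α]

noncomputable def graft (F T : Finset (α × α)) (y a b : α) : Finset (α × α) :=
  (F \ treeArcs F y) ∪ T ∪ {(a, b)}

variable {E F T : Finset (α × α)} {y a b : α}

lemma mem_graft {g : α × α} :
    g ∈ graft F T y a b ↔ (g ∈ F ∧ g.1 ∉ treeVerts F y) ∨ g ∈ T ∨ g = (a, b) := by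
  simp only [graft, treeArcs, Finset.mem_union, Finset.mem_sdiff, Finset.mem_filter,
    Finset.mem_singleton]
  tauto

lemma mem_of_mem_graft_of_notMem {i j : α} (hT : IsTreeOn E T (treeVerts F y) a)
    (hij : (i, j) ∈ graft F T y a b) (hi : i ∉ treeVerts F y) : (i, j) ∈ F := by
  rcases mem_graft.1 hij with ⟨hij, -⟩ | hij | hij
  · exact hij
  · exact absurd (hT.2.2.1 _ hij).1 hi
  · cases hij; exact absurd hT.1 hi

lemma graft_subset (hFE : F ⊆ E) (hT : IsTreeOn E T (treeVerts F y) a) (hab : (a, b) ∈ E) :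
    graft F T y a b ⊆ E := by
  intro g hg
  rcases mem_graft.1 hg with ⟨hg, -⟩ | hg | rfl
  exacts [hFE hg, hT.2.1 hg, hab]

lemma transGen_graft_of_notMem (hT : IsTreeOn E T (treeVerts F y) a) {i j : α}
    (h : Relation.TransGen (arcRel (graft F T y a b)) i j) (hi : i ∉ treeVerts F y) :
    Relation.TransGen (arcRel F) i j ∧ j ∉ treeVerts F y := by
  induction h using Relation.TransGen.head_induction_on with
  | single hij =>
    have hij := mem_of_mem_graft_of_notMem hT hij hi
    exact ⟨.single hij, notMem_treeVerts_of_mem hij hi⟩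
  | head hic _ ih =>
    have hic := mem_of_mem_graft_of_notMem hT hic hi
    obtain ⟨hcj, hj⟩ := ih (notMem_treeVerts_of_mem hic hi)
    exact ⟨.head hic hcj, hj⟩

lemma transGen_graft_of_mem (hT : IsTreeOn E T (treeVerts F y) a) (hb : b ∉ treeVerts F y)
    {i j : α} (h : Relation.TransGen (arcRel (graft F T y a b)) i j) (hi : i ∈ treeVerts F y)
    (hj : j ∈ treeVerts F y) : Relation.TransGen (arcRel T) i j := by
  have step : ∀ {i c}, i ∈ treeVerts F y → (i, c) ∈ graft F T y a b → c ∈ treeVerts F y →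
      (i, c) ∈ T := by
    intro i c hi hic hc
    rcases mem_graft.1 hic with ⟨-, hi'⟩ | hic | hic
    · exact absurd hi hi'
    · exact hic
    · cases hic; exact absurd hc hb
  induction h using Relation.TransGen.head_induction_on with
  | single hij => exact .single (step hi hij hj)
  | @head i c hic hcj ih =>
    have hc : c ∈ treeVerts F y := by
      by_contra hc
      exact (transGen_graft_of_notMem hT hcj hc).2 hj
    exact .head (step hi hic hc) (ih hc)

lemma isFunctional_graft (hF : IsFunctional F) (hT : IsTreeOn E T (treeVerts F y) a) :
    IsFunctional (graft F T y a b) := by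
  intro i j j' hj hj'
  by_cases hi : i ∈ treeVerts F y
  · have hout : ∀ {c}, (i, c) ∈ graft F T y a b → (i, c) ∈ T ∨ (i, c) = (a, b) := by
      intro c hic
      rcases mem_graft.1 hic with ⟨-, hi'⟩ | hic | hic
      exacts [absurd hi hi', .inl hic, .inr hic]
    rcases hout hj with hj | hj <;> rcases hout hj' with hj' | hj'
    · exact hT.isEForest.1 i j j' hj hj'
    · cases hj'; exact absurd hj (hT.2.2.2.2.1 j)
    · cases hj; exact absurd hj' (hT.2.2.2.2.1 j')
    · cases hj; cases hj'; rfl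
  · exact hF i j j' (mem_of_mem_graft_of_notMem hT hj hi) (mem_of_mem_graft_of_notMem hT hj' hi)

lemma isEForest_graft (hF : IsEForest F) (hT : IsTreeOn E T (treeVerts F y) a)
    (hb : b ∉ treeVerts F y) : IsEForest (graft F T y a b) := by
  refine ⟨isFunctional_graft hF.1 hT, fun i hcyc => ?_⟩
  by_cases hi : i ∈ treeVerts F y
  · exact hT.isEForest.2 i (transGen_graft_of_mem hT hb hcyc hi hi)
  · exact hF.2 i (transGen_graft_of_notMem hT hcyc hi).1

lemma rootSet_graft (hT : IsTreeOn E T (treeVerts F y) a) :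
    rootSet (graft F T y a b) = rootSet F \ {y} := by
  ext i
  simp only [Finset.mem_sdiff, Finset.mem_singleton]
  by_cases hi : i ∈ treeVerts F y
  · refine iff_of_false (fun hroot => ?_) fun ⟨hroot, hiy⟩ =>
      hiy (eq_of_mem_rootSet_of_mem_treeVerts hroot hi)
    by_cases hia : i = a
    · exact mem_rootSet.1 hroot b (mem_graft.2 (.inr (.inr (by rw [hia]))))
    · obtain ⟨c, hc, -⟩ := hT.2.2.2.1 i hi hia
      exact mem_rootSet.1 hroot c (mem_graft.2 (.inr (.inl hc)))
  · have hiy : i ≠ y := by rintro rfl; exact hi self_mem_treeVerts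
    simp only [mem_rootSet, hiy, not_false_eq_true, and_true]
    exact forall_congr' fun j => not_congr
      ⟨fun hij => mem_of_mem_graft_of_notMem hT hij hi, fun hij => mem_graft.2 (.inl ⟨hij, hi⟩)⟩

lemma restrictArcs_graft_self (hT : IsTreeOn E T (treeVerts F y) a) (hb : b ∉ treeVerts F y) :
    restrictArcs (graft F T y a b) (treeVerts F y) = T := by
  ext g
  simp only [restrictArcs, Finset.mem_filter]
  constructor
  · rintro ⟨hg, hg₁, hg₂⟩
    rcases mem_graft.1 hg with ⟨-, hg₁'⟩ | hg | rfl
    exacts [absurd hg₁ hg₁', hg, absurd hg₂ hb]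
  · intro hg
    exact ⟨mem_graft.2 (.inr (.inl hg)), hT.2.2.1 g hg⟩

lemma restrictArcs_graft_of_ne (hF : IsFunctional F) (hT : IsTreeOn E T (treeVerts F y) a)
    (hy : y ∈ rootSet F) {q : α} (hq : q ∈ rootSet F) (hqy : q ≠ y) :
    restrictArcs (graft F T y a b) (treeVerts F q) = treeArcs F q := by
  have hdisj := hF.disjoint_treeVerts hq hy hqy
  ext ⟨i, j⟩
  simp only [restrictArcs, treeArcs, Finset.mem_filter]
  constructor
  · rintro ⟨hij, hi, -⟩
    exact ⟨mem_of_mem_graft_of_notMem hT hij (Finset.disjoint_left.1 hdisj hi), hi⟩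
  · rintro ⟨hij, hi⟩
    exact ⟨mem_graft.2 (.inl ⟨hij, Finset.disjoint_left.1 hdisj hi⟩), hi,
      hF.mem_treeVerts_of_mem hq hij hi⟩

lemma aweight_graft (v : α → α → ℝ) (hT : IsTreeOn E T (treeVerts F y) a) :
    aweight v (graft F T y a b) =
      aweight v F - aweight v (treeArcs F y) + aweight v T + v a b := by
  have hdisj₁ : Disjoint (F \ treeArcs F y) T := by
    refine Finset.disjoint_left.2 fun g hg hgT => ?_
    simp only [treeArcs, Finset.mem_sdiff, Finset.mem_filter, not_and] at hg
    exact hg.2 hg.1 (hT.2.2.1 g hgT).1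
  have hdisj₂ : Disjoint (F \ treeArcs F y ∪ T) {(a, b)} := by
    refine Finset.disjoint_singleton_right.2 fun hab => ?_
    rcases Finset.mem_union.1 hab with hab | hab
    · simp only [treeArcs, Finset.mem_sdiff, Finset.mem_filter, not_and] at hab
      exact hab.2 hab.1 hT.1
    · exact hT.2.2.2.2.1 b hab
  have hsub : treeArcs F y ⊆ F := Finset.filter_subset _ _
  rw [graft, aweight, Finset.sum_union hdisj₂, Finset.sum_union hdisj₁,
    Finset.sum_sdiff_eq_sub hsub, Finset.sum_singleton]
  rfl

variable {k : ℕ}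

lemma graft_mem_FSet (hF : F ∈ FSet E k) (hy : y ∈ rootSet F)
    (hT : IsTreeOn E T (treeVerts F y) a) (hb : b ∉ treeVerts F y) (hab : (a, b) ∈ E) :
    graft F T y a b ∈ FSet E (k - 1) := by
  refine ⟨graft_subset hF.1 hT hab, isEForest_graft hF.2.1 hT hb, ?_⟩
  rw [rootSet_graft hT, Finset.card_sdiff_of_subset (Finset.singleton_subset_iff.2 hy),
    Finset.card_singleton, hF.2.2]

lemma isDescendant_graft (hF : IsFunctional F) (hy : y ∈ rootSet F)
    (hT : IsTreeOn E T (treeVerts F y) a) (hb : b ∉ treeVerts F y) :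
    IsDescendant E F (graft F T y a b) y := by
  refine ⟨hy, rootSet_graft hT, fun q hq => ?_, a, hT.1, ?_⟩
  · rw [rootSet_graft hT, Finset.mem_sdiff, Finset.mem_singleton] at hq
    exact restrictArcs_graft_of_ne hF hT hy hq.1 hq.2
  · rwa [restrictArcs_graft_self hT hb]

lemma aweight_bw_graft (P : PotGraph α) (hF : IsFunctional F) (hFE : F ⊆ E)
    (hy : y ∈ rootSet F) (hT : IsTreeOn E T (treeVerts F y) a)
    (hTF : undir T = undir (treeArcs F y)) :
    aweight (bw P) (graft F T y a b) = aweight (bw P) F + P.p a b - P.p y y := by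
  have hreroot := (isTreeOn_treeArcs hF hFE hy).aweight_bw_sub P hT hTF.symm
  rw [aweight_graft _ hT, bw]
  linarith

end Graft

section EdgeGraph

variable {β : Type*} {T : Finset (Sym2 β)} {u v w q r : β}

abbrev edgeGraph (T : Finset (Sym2 β)) : SimpleGraph β :=
  SimpleGraph.fromEdgeSet (T : Set (Sym2 β))

lemma edgeGraph_mono {T' : Finset (Sym2 β)} (h : T ⊆ T') : edgeGraph T ≤ edgeGraph T' :=
  SimpleGraph.fromEdgeSet_mono (Finset.coe_subset.2 h)

lemma reachable_edgeGraph_of_mem (h : s(u, v) ∈ T) : (edgeGraph T).Reachable u v := by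
  by_cases huv : u = v
  · exact huv ▸ .refl u
  · exact SimpleGraph.Adj.reachable ((SimpleGraph.fromEdgeSet_adj _).2 ⟨h, huv⟩)

variable [DecidableEq β]

lemma reachable_erase_of_walk {f : Sym2 β} (p : (edgeGraph T).Walk u v) (hp : f ∉ p.edges) :
    (edgeGraph (T.erase f)).Reachable u v := by
  induction p with
  | nil => rfl
  | cons h p ih =>
    rw [SimpleGraph.Walk.edges_cons, List.mem_cons, not_or] at hp
    refine .trans (reachable_edgeGraph_of_mem ?_) (ih hp.2)
    exact Finset.mem_erase.2 ⟨Ne.symm hp.1, ((SimpleGraph.fromEdgeSet_adj _).1 h).1⟩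

lemma reachable_erase_or (h : (edgeGraph T).Reachable v w) :
    (edgeGraph (T.erase s(q, r))).Reachable v w ∨ (edgeGraph (T.erase s(q, r))).Reachable v q ∨
      (edgeGraph (T.erase s(q, r))).Reachable v r := by
  obtain ⟨p⟩ := h
  induction p with
  | nil => exact .inl (.refl _)
  | @cons a c _ hac _ ih =>
    by_cases he : s(a, c) = s(q, r)
    · rcases Sym2.eq_iff.1 he with ⟨rfl, -⟩ | ⟨rfl, -⟩
      exacts [.inr (.inl (.refl _)), .inr (.inr (.refl _))]
    · have hac' : (edgeGraph (T.erase s(q, r))).Reachable a c :=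
        reachable_edgeGraph_of_mem
          (Finset.mem_erase.2 ⟨he, ((SimpleGraph.fromEdgeSet_adj _).1 hac).1⟩)
      exact ih.imp hac'.trans (Or.imp hac'.trans hac'.trans)

lemma preconnected_insert_erase (hT : (edgeGraph T).Preconnected)
    (hu : (edgeGraph (T.erase s(q, r))).Reachable u q)
    (hw : (edgeGraph (T.erase s(q, r))).Reachable w r) :
    (edgeGraph (insert s(u, w) (T.erase s(q, r)))).Preconnected := by
  have hmono := edgeGraph_mono (Finset.subset_insert s(u, w) (T.erase s(q, r)))
  have hrq : (edgeGraph (insert s(u, w) (T.erase s(q, r)))).Reachable r q :=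
    ((hw.mono hmono).symm.trans
      (reachable_edgeGraph_of_mem (Finset.mem_insert_self _ _)).symm).trans (hu.mono hmono)
  have hq : ∀ v, (edgeGraph (insert s(u, w) (T.erase s(q, r)))).Reachable v q := by
    intro v
    rcases reachable_erase_or (hT v q) with h | h | h
    exacts [h.mono hmono, h.mono hmono, (h.mono hmono).trans hrq]
  exact fun v v' => (hq v).trans (hq v').symm

/-- Take the first edge of a path from `u` to `v` that leaves `D`. -/
lemma exists_boundary_edge {D : Set β} (h : (edgeGraph T).Reachable u v) (hu : u ∈ D)
    (hv : v ∉ D) : ∃ q ∈ D, ∃ r ∉ D, s(q, r) ∈ T ∧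
      (edgeGraph (T.erase s(q, r))).Reachable u q ∧
        (edgeGraph (T.erase s(q, r))).Reachable r v := by
  obtain ⟨p, hp⟩ := h.some.toPath
  clear h
  induction p with
  | nil => exact absurd hu hv
  | @cons a c _ hac p ih =>
    have hT : s(a, c) ∈ T := ((SimpleGraph.fromEdgeSet_adj _).1 hac).1
    by_cases hc : c ∈ D
    · obtain ⟨q, hq, r, hr, hqr, hcq, hrv⟩ := ih hc hv hp.of_cons
      have hne : s(a, c) ≠ s(q, r) := by
        intro he
        rcases Sym2.eq_iff.1 he with ⟨-, rfl⟩ | ⟨rfl, -⟩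
        exacts [hr hc, hr hu]
      exact ⟨q, hq, r, hr, hqr,
        (reachable_edgeGraph_of_mem (Finset.mem_erase.2 ⟨hne, hT⟩)).trans hcq, hrv⟩
    · refine ⟨a, hu, c, hc, hT, .refl _, reachable_erase_of_walk p fun he => ?_⟩
      exact ((SimpleGraph.Walk.cons_isPath_iff hac p).1 hp).2
        (p.fst_mem_support_of_mem_edges he)

end EdgeGraph

section Apex

variable {A F : Finset (α × α)} {N : Finset α} {T : Finset (Sym2 (Option α))} {i j : α}
  [DecidableEq α]

def liftArcs (A : Finset (α × α)) : Finset (Sym2 (Option α)) :=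
  (undir A).image (Sym2.map some)

def spokes (N : Finset α) : Finset (Sym2 (Option α)) :=
  N.image fun i => s(some i, none)

lemma mk_mem_liftArcs (h : (i, j) ∈ A) : s(some i, some j) ∈ liftArcs A :=
  Finset.mem_image.2 ⟨s(i, j), Finset.mem_image.2 ⟨(i, j), h, rfl⟩, rfl⟩

lemma spoke_notMem_liftArcs : s(some i, none) ∉ liftArcs A := by
  simp only [liftArcs, Finset.mem_image]
  rintro ⟨e, -, he⟩
  induction e using Sym2.ind
  simp at he

lemma spoke_mem_spokes : s(some i, none) ∈ spokes N ↔ i ∈ N := by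
  simp [spokes]

lemma disjoint_liftArcs_spokes : Disjoint (liftArcs A) (spokes N) := by
  refine Finset.disjoint_right.2 fun e he => ?_
  obtain ⟨i, -, rfl⟩ := Finset.mem_image.1 he
  exact spoke_notMem_liftArcs

lemma card_sdiff_insert_erase_lt {R X : Finset α} {l q : α} (hl : l ∈ R \ X) (hq : q ∉ R) :
    (R \ insert l (X.erase q)).card < (R \ X).card := by
  refine Finset.card_lt_card ⟨fun i hi => ?_, fun hsub => ?_⟩
  · simp only [Finset.mem_sdiff, Finset.mem_insert, Finset.mem_erase, not_or, not_and] at hi ⊢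
    exact ⟨hi.1, fun hiX => hi.2.2 (fun hiq => hq (hiq ▸ hi.1)) hiX⟩
  · exact (Finset.mem_sdiff.1 (hsub hl)).2 (Finset.mem_insert_self _ _)

lemma reachable_liftArcs (h : Relation.ReflTransGen (arcRel F) i j) :
    (edgeGraph (liftArcs F)).Reachable (some i) (some j) := by
  induction h with
  | refl => rfl
  | tail _ hjk ih => exact ih.trans (reachable_edgeGraph_of_mem (mk_mem_liftArcs hjk))

lemma card_liftArcs (hA : ∀ i, ¬ Relation.TransGen (arcRel A) i i) :
    (liftArcs A).card = A.card := by
  rw [liftArcs, Finset.card_image_of_injective _ (Sym2.map.injective (Option.some_injective α)),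
    undir, Finset.card_image_of_injOn (undir_injOn hA)]

variable [Fintype α]

/-- The apex `none` is joined to each vertex `i` by an edge of weight `p i i`, standing for the
loop at `i`. -/
def apexEdgeWeightFun (P : PotGraph α) : Option α → Option α → ℝ
  | some i, some j => P.p i j
  | some i, none => P.p i i
  | none, some j => P.p j j
  | none, none => 0

lemma apexEdgeWeightFun_comm (P : PotGraph α) (u v : Option α) :
    apexEdgeWeightFun P u v = apexEdgeWeightFun P v u := by
  cases u <;> cases v <;> first | rfl | exact P.symm_w _ _

def apexEdgeWeight (P : PotGraph α) : Sym2 (Option α) → ℝ :=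
  Sym2.lift ⟨apexEdgeWeightFun P, apexEdgeWeightFun_comm P⟩

lemma apexEdgeWeight_spoke (P : PotGraph α) (i : α) :
    apexEdgeWeight P s(some i, none) = P.p i i := rfl

lemma apexEdgeWeight_liftArc (P : PotGraph α) (i j : α) :
    apexEdgeWeight P s(some i, some j) = P.p i j := rfl

def apexWeight (P : PotGraph α) (T : Finset (Sym2 (Option α))) : ℝ :=
  ∑ e ∈ T, apexEdgeWeight P e

noncomputable def apexNbrs (T : Finset (Sym2 (Option α))) : Finset α :=
  Finset.univ.filter fun i => s(some i, none) ∈ T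

noncomputable def toApex (F : Finset (α × α)) : Finset (Sym2 (Option α)) :=
  liftArcs F ∪ spokes (rootSet F)

def apexEdges (P : PotGraph α) : Finset (Sym2 (Option α)) :=
  liftArcs (barcs P) ∪ spokes Finset.univ

def IsApexTree (P : PotGraph α) (T : Finset (Sym2 (Option α))) : Prop :=
  T ⊆ apexEdges P ∧ (edgeGraph T).Preconnected ∧ T.card = Fintype.card α

variable {P : PotGraph α}

lemma mem_apexNbrs : i ∈ apexNbrs T ↔ s(some i, none) ∈ T := by
  simp [apexNbrs]

lemma apexNbrs_toApex : apexNbrs (toApex F) = rootSet F := by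
  ext i
  simp [mem_apexNbrs, toApex, spoke_notMem_liftArcs, spoke_mem_spokes]

lemma mem_edges_of_mem_apexEdges (h : s(some i, some j) ∈ apexEdges P) : (i, j) ∈ P.edges := by
  simp only [apexEdges, spokes, liftArcs, undir, Finset.mem_union, Finset.mem_image] at h
  rcases h with ⟨e, ⟨⟨i', j'⟩, hij', rfl⟩, he⟩ | ⟨k, -, hk⟩
  · have hedge := (Finset.mem_filter.1 hij').1
    simp only [Sym2.map_mk, Sym2.eq_iff, Option.some.injEq] at he
    rcases he with ⟨rfl, rfl⟩ | ⟨rfl, rfl⟩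
    exacts [hedge, P.symm_mem _ _ hedge]
  · simp at hk

lemma toApex_subset_apexEdges (hF : F ⊆ barcs P) : toApex F ⊆ apexEdges P :=
  Finset.union_subset_union (Finset.image_subset_image (Finset.image_subset_image hF))
    (Finset.image_subset_image (Finset.subset_univ _))

lemma apexWeight_liftArcs :
    apexWeight P (liftArcs A) = uweight P (undir A) := by
  rw [apexWeight, liftArcs,
    Finset.sum_image fun _ _ _ _ h => Sym2.map.injective (Option.some_injective α) h]
  refine Finset.sum_congr rfl fun e _ => ?_
  induction e using Sym2.ind
  rfl

lemma apexWeight_spokes : apexWeight P (spokes N) = ∑ i ∈ N, P.p i i := by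
  rw [apexWeight, spokes, Finset.sum_image fun _ _ _ _ h => by simpa [Sym2.eq_iff] using h]
  rfl

lemma apexWeight_toApex (hF : IsEForest F) :
    apexWeight P (toApex F) = aweight (bw P) F + ∑ i, P.p i i := by
  rw [toApex, apexWeight, Finset.sum_union disjoint_liftArcs_spokes, ← apexWeight, ← apexWeight,
    apexWeight_liftArcs, apexWeight_spokes, hF.aweight_bw, image_fst_eq_compl_rootSet,
    ← Finset.sum_compl_add_sum (rootSet F)]
  ring

lemma IsEForest.card_toApex (hF : IsEForest F) : (toApex F).card = Fintype.card α := by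
  rw [toApex, Finset.card_union_of_disjoint disjoint_liftArcs_spokes, card_liftArcs hF.2, spokes,
    Finset.card_image_of_injective _ fun _ _ h => by simpa [Sym2.eq_iff] using h,
    IsFunctional.card_add_card_rootSet hF.1]

lemma IsEForest.isApexTree_toApex (hF : IsEForest F) (hFE : F ⊆ barcs P) :
    IsApexTree P (toApex F) := by
  have hspoke : ∀ r ∈ rootSet F, s(some r, none) ∈ toApex F := fun r hr =>
    Finset.mem_union_right _ (spoke_mem_spokes.2 hr)
  have hroot : ∀ v, (edgeGraph (toApex F)).Reachable v none := by
    rintro (_ | i)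
    · rfl
    obtain ⟨r, hr, hir⟩ := hF.exists_mem_rootSet_reflTransGen i
    exact ((reachable_liftArcs hir).mono (edgeGraph_mono Finset.subset_union_left)).trans
      (reachable_edgeGraph_of_mem (hspoke r hr))
  exact ⟨toApex_subset_apexEdges hFE, fun u v => (hroot u).trans (hroot v).symm, hF.card_toApex⟩

end Apex

variable [Fintype α] [DecidableEq α]

section Orient

variable {P : PotGraph α} {T : Finset (Sym2 (Option α))}

def parentArcs (N : Finset α) (par : α → α) : Finset (α × α) :=
  Nᶜ.image fun i => (i, par i)

variable {N : Finset α} {par : α → α}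

lemma mem_parentArcs {i j : α} : (i, j) ∈ parentArcs N par ↔ i ∉ N ∧ j = par i := by
  simp only [parentArcs, Finset.mem_image, Finset.mem_compl, Prod.mk.injEq]
  constructor
  · rintro ⟨i, hi, rfl, rfl⟩
    exact ⟨hi, rfl⟩
  · rintro ⟨hi, rfl⟩
    exact ⟨i, hi, rfl, rfl⟩

lemma rootSet_parentArcs : rootSet (parentArcs N par) = N := by
  ext i
  simp [mem_rootSet, mem_parentArcs]

lemma isEForest_parentArcs (d : α → ℕ) (hd : ∀ i ∉ N, d (par i) < d i) :
    IsEForest (parentArcs N par) := by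
  have hdec : ∀ {i j}, Relation.TransGen (arcRel (parentArcs N par)) i j → d j < d i := by
    intro i j h
    induction h with
    | single hij => obtain ⟨hi, rfl⟩ := mem_parentArcs.1 hij; exact hd i hi
    | tail _ hjk ih => obtain ⟨hj, rfl⟩ := mem_parentArcs.1 hjk; exact (hd _ hj).trans ih
  refine ⟨fun i j j' hj hj' => ?_, fun i h => (hdec h).false⟩
  rw [(mem_parentArcs.1 hj).2, (mem_parentArcs.1 hj').2]

lemma exists_apex_parent (hT : (edgeGraph T).Preconnected) {i : α} (hi : i ∉ apexNbrs T) :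
    ∃ j, s(some i, some j) ∈ T ∧
      (edgeGraph T).dist (some j) none < (edgeGraph T).dist (some i) none := by
  obtain ⟨p, hp⟩ := (hT (some i) none).exists_walk_length_eq_dist
  cases p with
  | cons hadj p =>
    rename_i w
    rcases w with _ | j
    · exact absurd (mem_apexNbrs.2 ((SimpleGraph.fromEdgeSet_adj _).1 hadj).1) hi
    · refine ⟨j, ((SimpleGraph.fromEdgeSet_adj _).1 hadj).1, ?_⟩
      have := SimpleGraph.dist_le p
      rw [SimpleGraph.Walk.length_cons] at hp
      omega

/-- Each vertex not adjacent to the apex points to a neighbour closer to the apex; counting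
edges shows that these arcs and the spokes exhaust `T`. -/
lemma IsApexTree.exists_eq_toApex (hT : IsApexTree P T) :
    ∃ A ∈ FSet (barcs P) (apexNbrs T).card, T = toApex A := by
  choose! par hpar hd using fun i => exists_apex_parent (T := T) hT.2.1 (i := i)
  have hA := isEForest_parentArcs (N := apexNbrs T) (fun i => (edgeGraph T).dist (some i) none)
    hd
  have hsub : toApex (parentArcs (apexNbrs T) par) ⊆ T := by
    refine Finset.union_subset ?_ ?_
    · simp only [liftArcs, undir, Finset.image_image, Finset.image_subset_iff, parentArcs,
        Finset.mem_compl, Function.comp_apply, Sym2.map_mk]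
      exact fun i hi => hpar i hi
    · rw [rootSet_parentArcs]
      simp only [spokes, Finset.image_subset_iff]
      exact fun i hi => mem_apexNbrs.1 hi
  refine ⟨parentArcs (apexNbrs T) par, ⟨?_, hA, by rw [rootSet_parentArcs]⟩,
    (Finset.eq_of_subset_of_card_le hsub (by rw [hA.card_toApex, hT.2.2])).symm⟩
  rintro ⟨i, j⟩ hij
  obtain ⟨hi, rfl⟩ := mem_parentArcs.1 hij
  refine Finset.mem_filter.2 ⟨mem_edges_of_mem_apexEdges (hT.1 (hpar i hi)), fun h => ?_⟩
  exact (hd i hi).ne (congrArg (fun j => (edgeGraph T).dist (some j) none) h).symm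

end Orient

section Exchange

variable {P : PotGraph α} {T : Finset (Sym2 (Option α))} {e f : Sym2 (Option α)} {l q r : α}

lemma apexNbrs_insert_spoke : apexNbrs (insert s(some l, none) T) = insert l (apexNbrs T) := by
  ext i
  simp [mem_apexNbrs]

lemma apexNbrs_erase_spoke : apexNbrs (T.erase s(some q, none)) = (apexNbrs T).erase q := by
  ext i
  simp [mem_apexNbrs, and_comm]

lemma apexNbrs_erase_liftArc : apexNbrs (T.erase s(some q, some r)) = apexNbrs T := by
  ext i
  simp [mem_apexNbrs]

lemma apexWeight_insert_erase (heT : e ∉ T) (hf : f ∈ T) :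
    apexWeight P (insert e (T.erase f)) + apexEdgeWeight P f =
      apexWeight P T + apexEdgeWeight P e := by
  rw [apexWeight, Finset.sum_insert fun h => heT (Finset.mem_of_mem_erase h), add_assoc,
    Finset.sum_erase_add _ _ hf, add_comm, apexWeight]

lemma IsApexTree.insert_erase (hT : IsApexTree P T) (he : e ∈ apexEdges P) (heT : e ∉ T)
    (hf : f ∈ T) (hconn : (edgeGraph (insert e (T.erase f))).Preconnected) :
    IsApexTree P (insert e (T.erase f)) := by
  refine ⟨Finset.insert_subset he ((Finset.erase_subset _ _).trans hT.1), hconn, ?_⟩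
  rw [Finset.card_insert_of_notMem fun h => heT (Finset.mem_of_mem_erase h),
    Finset.card_erase_add_one hf, hT.2.2]

lemma spoke_mem_apexEdges : s(some l, none) ∈ apexEdges P :=
  Finset.mem_union_right _ (spoke_mem_spokes.2 (Finset.mem_univ l))

lemma IsApexTree.exists_exchange (hT : IsApexTree P T) {S : Finset α} (hl : l ∈ S)
    (hlT : l ∉ apexNbrs T) :
    ∃ q ∈ S, ∃ r ∉ S.image some, s(some q, r) ∈ T ∧
      IsApexTree P (insert s(some l, none) (T.erase s(some q, r))) := by
  obtain ⟨_, hqD, r, hr, hqr, hlq, hrn⟩ := exists_boundary_edge (D := ↑(S.image some))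
    (hT.2.1 (some l) none) (Finset.mem_coe.2 (Finset.mem_image_of_mem _ hl)) (by simp)
  obtain ⟨q, hq, rfl⟩ := Finset.mem_image.1 (Finset.mem_coe.1 hqD)
  exact ⟨q, hq, r, hr, hqr, hT.insert_erase spoke_mem_apexEdges (mem_apexNbrs.not.1 hlT) hqr
    (preconnected_insert_erase hT.2.1 hlq hrn.symm)⟩

end Exchange

section Minimality

variable {v : α → α → ℝ} {E : Finset (α × α)} {k : ℕ} {F A : Finset (α × α)}

lemma IsMinForest.aweight_le (hF : IsMinForest v E k F) (hA : A ∈ FSet E k) :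
    aweight v F ≤ aweight v A :=
  EReal.coe_le_coe_iff.1 (hF.2 ▸ sInf_le ⟨A, hA, rfl⟩)

lemma isMinForest_of_forall_le (hF : F ∈ FSet E k)
    (h : ∀ A ∈ FSet E k, aweight v F ≤ aweight v A) : IsMinForest v E k F :=
  ⟨hF, le_antisymm (le_sInf fun _ ⟨A, hA, hw⟩ => hw ▸ EReal.coe_le_coe_iff.2 (h A hA))
    (sInf_le ⟨F, hF, rfl⟩)⟩

variable {P : PotGraph α} {T : Finset (Sym2 (Option α))}

lemma IsMinForest.apexWeight_le (hF : IsMinForest (bw P) (barcs P) k F) (hT : IsApexTree P T)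
    (hdeg : (apexNbrs T).card = k) : apexWeight P (toApex F) ≤ apexWeight P T := by
  obtain ⟨A, hA, rfl⟩ := hT.exists_eq_toApex
  rw [apexWeight_toApex hF.1.2.1, apexWeight_toApex hA.2.1]
  have := hF.aweight_le (hdeg ▸ hA)
  linarith

/-- Rerooting the tree `T^F_l` at `q` gives another forest with `k` trees. -/
lemma IsMinForest.potential_root_le (hF : IsMinForest (bw P) (barcs P) k F) {l q : α}
    (hl : l ∈ rootSet F) (hq : q ∈ treeVerts F l) : P.p l l ≤ P.p q q := by
  obtain ⟨hFE, hFor, hcard⟩ := hF.1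
  obtain rfl | hql := eq_or_ne q l
  · exact le_rfl
  have hqF : q ∉ rootSet F := fun h => hql (eq_of_mem_rootSet_of_mem_treeVerts h hq)
  have hlT : s(some l, none) ∈ toApex F := Finset.mem_union_right _ (spoke_mem_spokes.2 hl)
  have hqT : s(some q, none) ∉ toApex F := by
    rwa [← mem_apexNbrs, apexNbrs_toApex]
  have hlift : liftArcs F ⊆ (toApex F).erase s(some l, none) := fun e he =>
    Finset.mem_erase.2 ⟨fun h => spoke_notMem_liftArcs (h ▸ he), Finset.mem_union_left _ he⟩
  have hT := hFor.isApexTree_toApex hFE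
  have hT' := hT.insert_erase spoke_mem_apexEdges hqT hlT (preconnected_insert_erase hT.2.1
    ((reachable_liftArcs (mem_treeVerts.1 hq)).mono (edgeGraph_mono hlift)) (.refl _))
  have hdeg :
      (apexNbrs (insert s(some q, none) ((toApex F).erase s(some l, none)))).card = k := by
    rw [apexNbrs_insert_spoke, apexNbrs_erase_spoke, apexNbrs_toApex,
      Finset.card_insert_of_notMem fun h => hqF (Finset.mem_of_mem_erase h),
      Finset.card_erase_add_one hl, hcard]
  have hle := hF.apexWeight_le hT' hdeg
  have hw := apexWeight_insert_erase (P := P) hqT hlT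
  rw [apexEdgeWeight_spoke, apexEdgeWeight_spoke] at hw
  linarith

end Minimality

section LowerBound

variable {P : PotGraph α} {k : ℕ} {F : Finset (α × α)} {δ : ℝ}

/-- Induction on the number of roots of `F` not adjacent to the apex in `T`, each step being
one exchange of `IsApexTree.exists_exchange`. -/
lemma IsMinForest.apexWeight_add_le (hF : IsMinForest (bw P) (barcs P) k F)
    (hδ : ∀ l ∈ rootSet F, ∀ q ∈ treeVerts F l, ∀ r ∉ treeVerts F l, (q, r) ∈ P.edges →
      δ ≤ P.p q r - P.p l l)
    {T : Finset (Sym2 (Option α))} (hT : IsApexTree P T) (hdeg : (apexNbrs T).card + 1 = k) :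
    apexWeight P (toApex F) + δ ≤ apexWeight P T := by
  induction hn : (rootSet F \ apexNbrs T).card using Nat.strong_induction_on generalizing T with
  | _ n ih =>
  obtain ⟨l, hl⟩ := Finset.sdiff_nonempty_of_card_lt_card (s := apexNbrs T) (t := rootSet F)
    (by rw [hF.1.2.2]; omega)
  obtain ⟨hlF, hlT⟩ := Finset.mem_sdiff.1 hl
  obtain ⟨q, hq, r, hr, hqrT, hT'⟩ := hT.exists_exchange (self_mem_treeVerts (F := F)) hlT
  have hw := apexWeight_insert_erase (P := P) (mem_apexNbrs.not.1 hlT) hqrT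
  rcases r with _ | r
  · have hqT : q ∈ apexNbrs T := mem_apexNbrs.2 hqrT
    have hqF : q ∉ rootSet F := fun h =>
      hlT (eq_of_mem_rootSet_of_mem_treeVerts h hq ▸ hqT)
    have hdeg' :
        (apexNbrs (insert s(some l, none) (T.erase s(some q, none)))).card + 1 = k := by
      rw [apexNbrs_insert_spoke, apexNbrs_erase_spoke,
        Finset.card_insert_of_notMem fun h => hlT (Finset.mem_of_mem_erase h),
        Finset.card_erase_add_one hqT, hdeg]
    have hlt := card_sdiff_insert_erase_lt hl hqF
    rw [← apexNbrs_erase_spoke, ← apexNbrs_insert_spoke, hn] at hlt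
    have hle := ih _ hlt hT' hdeg' rfl
    have hpot := hF.potential_root_le hlF hq
    rw [apexEdgeWeight_spoke, apexEdgeWeight_spoke] at hw
    linarith
  · have hdeg' : (apexNbrs (insert s(some l, none) (T.erase s(some q, some r)))).card = k := by
      rw [apexNbrs_insert_spoke, apexNbrs_erase_liftArc, Finset.card_insert_of_notMem hlT, hdeg]
    have hle := hF.apexWeight_le hT' hdeg'
    have hcross := hδ l hlF q hq r (fun h => hr (Finset.mem_image_of_mem _ h))
      (mem_edges_of_mem_apexEdges (hT.1 hqrT))
    rw [apexEdgeWeight_liftArc, apexEdgeWeight_spoke] at hw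
    linarith

lemma IsMinForest.aweight_add_le (hF : IsMinForest (bw P) (barcs P) k F)
    (hδ : ∀ l ∈ rootSet F, ∀ q ∈ treeVerts F l, ∀ r ∉ treeVerts F l, (q, r) ∈ P.edges →
      δ ≤ P.p q r - P.p l l)
    {A : Finset (α × α)} (hA : A ∈ FSet (barcs P) (k - 1)) (hk : 1 ≤ k) :
    aweight (bw P) F + δ ≤ aweight (bw P) A := by
  have hle := hF.apexWeight_add_le hδ (hA.2.1.isApexTree_toApex hA.1)
    (by rw [apexNbrs_toApex, hA.2.2]; omega)
  rw [apexWeight_toApex hF.1.2.1, apexWeight_toApex hA.2.1] at hle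
  linarith

lemma minArc_le_of_mem_edges (hF : IsEForest F) {y x a b : α}
    (hminarc : ∀ l ∈ rootSet F, ∀ i ∈ rootSet F, l ≠ i →
      crossMin P F y x - ((P.p y y : ℝ) : EReal) ≤ crossMin P F l i - ((P.p l l : ℝ) : EReal))
    (habmin : ∀ q ∈ treeVerts F y, ∀ r ∈ treeVerts F x, (q, r) ∈ P.edges → P.p a b ≤ P.p q r) :
    ∀ l ∈ rootSet F, ∀ q ∈ treeVerts F l, ∀ r ∉ treeVerts F l, (q, r) ∈ P.edges →
      P.p a b - P.p y y ≤ P.p q r - P.p l l := by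
  intro l hl q hq r hr hqr
  obtain ⟨i, hi, hri⟩ := hF.exists_mem_rootSet_reflTransGen r
  have hli : l ≠ i := by rintro rfl; exact hr (mem_treeVerts.2 hri)
  have hab : ((P.p a b : ℝ) : EReal) ≤ crossMin P F y x :=
    le_sInf fun _ ⟨e, ⟨he₁, he₂, he⟩, hw⟩ => hw ▸ EReal.coe_le_coe_iff.2 (habmin _ he₁ _ he₂ he)
  have hqr' : crossMin P F l i ≤ ((P.p q r : ℝ) : EReal) :=
    sInf_le ⟨(q, r), ⟨hq, mem_treeVerts.2 hri, hqr⟩, rfl⟩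
  have := (EReal.sub_le_sub hab le_rfl).trans
    ((hminarc l hl i hi hli).trans (EReal.sub_le_sub hqr' le_rfl))
  exact EReal.coe_le_coe_iff.1 (by simpa only [← EReal.coe_sub] using this)

end LowerBound

theorem statement17_general (P : PotGraph α) (k : ℕ)
    (F : Finset (α × α)) (hF : IsMinForest (bw P) (barcs P) k F)
    (y x : α) (hy : y ∈ rootSet F) (hx : x ∈ rootSet F) (hyx : y ≠ x)
    (hminarc : ∀ l ∈ rootSet F, ∀ i ∈ rootSet F, l ≠ i →
      crossMin P F y x - ((P.p y y : ℝ) : EReal) ≤ crossMin P F l i - ((P.p l l : ℝ) : EReal))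
    (a b : α) (hb : b ∈ treeVerts F x) (hab : (a, b) ∈ P.edges)
    (habmin : ∀ q ∈ treeVerts F y, ∀ r ∈ treeVerts F x, (q, r) ∈ P.edges → P.p a b ≤ P.p q r)
    (T' : Finset (α × α)) (hT' : IsTreeOn (barcs P) T' (treeVerts F y) a)
    (hT'edges : undir T' = undir (treeArcs F y))
    (G : Finset (α × α)) (hG : G = (F \ treeArcs F y) ∪ T' ∪ {(a, b)}) :
    IsMinForest (bw P) (barcs P) (k - 1) G ∧ IsDescendant (barcs P) F G y ∧
      aweight (bw P) G = aweight (bw P) F + P.p a b - P.p y y := by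
  obtain ⟨hFE, hFor, hcard⟩ := hF.1
  have hbS : b ∉ treeVerts F y :=
    Finset.disjoint_right.1 (IsFunctional.disjoint_treeVerts hFor.1 hy hx hyx) hb
  have hab' : (a, b) ∈ barcs P := Finset.mem_filter.2 ⟨hab, fun h : a = b => hbS (h ▸ hT'.1)⟩
  have hweight := aweight_bw_graft P hFor.1 hFE hy hT' hT'edges (b := b)
  obtain rfl : G = graft F T' y a b := hG
  refine ⟨isMinForest_of_forall_le (graft_mem_FSet hF.1 hy hT' hbS hab') fun A hA => ?_,
    isDescendant_graft hFor.1 hy hT' hbS, hweight⟩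
  have hk : 1 ≤ k := hcard ▸ Finset.card_pos.2 ⟨y, hy⟩
  have := hF.aweight_add_le (minArc_le_of_mem_edges hFor hminarc habmin) hA hk
  linarith

/-- Let `F ∈ 𝓕̃^k` (`k ≥ 2`) be a minimal spanning entering forest
of the barrier digraph of `P`, let `(y,x)` be a minimum-weight arc of the enlarged
barrier digraph `V^k`, and let `(a,b)` be an edge of `P` with `a ∈ V(T^F_y)`,
`b ∈ V(T^F_x)` realizing the minimal barrier between `V(T^F_y)` and `V(T^F_x)`.
If `G` is obtained from `F` by reorienting the tree `T^F_y` so that its root becomes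
`a` (i.e. replacing `T^F_y` by the entering tree `T'` with root `a` on the same
undirected edges) and adding the arc `(a,b)`, then `G ∈ 𝓕̃^{k-1} ∩ 𝓡^F_y` and
`Υ^G = Υ^F + p a b - p y y`. -/
theorem statement17 (P : PotGraph α) (k : ℕ) (hk : 2 ≤ k)
    (F : Finset (α × α)) (hF : IsMinForest (bw P) (barcs P) k F)
    (y x : α) (hy : y ∈ rootSet F) (hx : x ∈ rootSet F) (hyx : y ≠ x)
    (hedge : ∃ e : α × α, e.1 ∈ treeVerts F y ∧ e.2 ∈ treeVerts F x ∧ e ∈ P.edges)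
    (hminarc : ∀ l ∈ rootSet F, ∀ i ∈ rootSet F, l ≠ i →
      crossMin P F y x - ((P.p y y : ℝ) : EReal) ≤ crossMin P F l i - ((P.p l l : ℝ) : EReal))
    (a b : α) (ha : a ∈ treeVerts F y) (hb : b ∈ treeVerts F x) (hab : (a, b) ∈ P.edges)
    (habmin : ∀ q ∈ treeVerts F y, ∀ r ∈ treeVerts F x, (q, r) ∈ P.edges → P.p a b ≤ P.p q r)
    (T' : Finset (α × α)) (hT' : IsTreeOn (barcs P) T' (treeVerts F y) a)
    (hT'edges : undir T' = undir (treeArcs F y))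
    (G : Finset (α × α)) (hG : G = (F \ treeArcs F y) ∪ T' ∪ {(a, b)}) :
    IsMinForest (bw P) (barcs P) (k - 1) G ∧ IsDescendant (barcs P) F G y ∧
      aweight (bw P) G = aweight (bw P) F + P.p a b - P.p y y :=
  statement17_general P k F hF y x hy hx hyx hminarc a b hb hab habmin T' hT' hT'edges G hG

end BarrierForests
end
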